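/- arXiv:2512.00897 — 2 statements merged into one kernel-verified Lean document; each statement's English description precedes it below -/
import Mathlib

section
/- Constant marginal-valuation ratio: for all q0, q1 ≥ 0, ∂V_L/∂n1 (q0,q1) = λ*(q0) · ∂V_S/∂n1 (q0,q1), where λ*(q0) = ( σ²·(q0+1) / ((q0+1) + σ²·(2·q0+1)) )²; in particular the ratio of the two types' marginal valuations of current data is independent of q1. -/
/-!
For fixed `n0`, both `D`, the numerator of `V_L` and the numerator of `V_S` are affine in `n1`,
so `V_L` and `V_S` are Möbius functions of `n1` sharing the denominator `D`. Their
`n1`-derivatives are therefore `(σ²(n0+1))² / D²` and `((n0+1) + σ²(2n0+1))² / D²`, whose ratio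
is `λ*(n0)` whatever `n1` is.
-/

/-- The denominator `D(n0,n1) = σ²(n0+n1+2 n0 n1) + (1+n0)(1+n1)`. -/
noncomputable def Dden (σ n0 n1 : ℝ) : ℝ :=
  σ^2 * (n0 + n1 + 2*n0*n1) + (1+n0)*(1+n1)

/-- Forecaster value `V_L`. -/
noncomputable def VL (σ n0 n1 : ℝ) : ℝ :=
  σ^4 * (n0 + n1 + 2*n0*n1) / Dden σ n0 n1

/-- Nowcaster value `V_S`. -/
noncomputable def VS (σ n0 n1 : ℝ) : ℝ :=
  VL σ n0 n1 + (3*σ^2*n0*n1 + 2*σ^2*n1 + n1 + n0*n1) / Dden σ n0 n1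

/-- The threshold `λ*(q0)`. -/
noncomputable def lamStar (σ q0 : ℝ) : ℝ :=
  (σ^2 * (q0+1) / ((q0+1) + σ^2 * (2*q0+1)))^2

theorem hasDerivAt_affine_div_affine {𝕜 : Type*} [NontriviallyNormedField 𝕜]
    (a b c d x : 𝕜) (hx : c * x + d ≠ 0) :
    HasDerivAt (fun y => (a * y + b) / (c * y + d)) ((a * d - b * c) / (c * x + d) ^ 2) x := by
  have affine : ∀ p q : 𝕜, HasDerivAt (fun y => p * y + q) p x := fun p q => by
    simpa using ((hasDerivAt_id x).const_mul p).add_const q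
  exact ((affine a b).div (affine c d) hx).congr_deriv (by ring)

theorem Dden_eq_affine (σ n0 n1 : ℝ) :
    Dden σ n0 n1 = ((n0 + 1) + σ ^ 2 * (2 * n0 + 1)) * n1 + (σ ^ 2 * n0 + n0 + 1) := by
  unfold Dden
  ring

theorem Dden_pos (σ : ℝ) {n0 n1 : ℝ} (h0 : 0 ≤ n0) (h1 : 0 ≤ n1) : 0 < Dden σ n0 n1 := by
  unfold Dden
  positivity

theorem hasDerivAt_VL (σ n0 n1 : ℝ) (hD : Dden σ n0 n1 ≠ 0) :
    HasDerivAt (fun y => VL σ n0 y) ((σ ^ 2 * (n0 + 1)) ^ 2 / Dden σ n0 n1 ^ 2) n1 := by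
  have hVL : (fun y => VL σ n0 y) = fun y => (σ ^ 4 * (2 * n0 + 1) * y + σ ^ 4 * n0) /
      (((n0 + 1) + σ ^ 2 * (2 * n0 + 1)) * y + (σ ^ 2 * n0 + n0 + 1)) := by
    funext y
    rw [VL, Dden_eq_affine]
    ring
  rw [hVL, Dden_eq_affine]
  rw [Dden_eq_affine] at hD
  exact (hasDerivAt_affine_div_affine _ _ _ _ n1 hD).congr_deriv (by ring)

theorem hasDerivAt_VS (σ n0 n1 : ℝ) (hD : Dden σ n0 n1 ≠ 0) :
    HasDerivAt (fun y => VS σ n0 y) (((n0 + 1) + σ ^ 2 * (2 * n0 + 1)) ^ 2 / Dden σ n0 n1 ^ 2)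
      n1 := by
  have hVS : (fun y => VS σ n0 y) = fun y =>
      ((σ ^ 4 * (2 * n0 + 1) + (3 * σ ^ 2 * n0 + 2 * σ ^ 2 + 1 + n0)) * y + σ ^ 4 * n0) /
      (((n0 + 1) + σ ^ 2 * (2 * n0 + 1)) * y + (σ ^ 2 * n0 + n0 + 1)) := by
    funext y
    rw [VS, VL, ← add_div, Dden_eq_affine]
    ring
  rw [hVS, Dden_eq_affine]
  rw [Dden_eq_affine] at hD
  exact (hasDerivAt_affine_div_affine _ _ _ _ n1 hD).congr_deriv (by ring)

theorem stmt11_general (σ : ℝ) (q0 q1 : ℝ) (h0 : 0 ≤ q0) (h1 : 0 ≤ q1) :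
    deriv (fun y => VL σ q0 y) q1 = lamStar σ q0 * deriv (fun y => VS σ q0 y) q1 := by
  have hD := (Dden_pos σ h0 h1).ne'
  have hA : (q0 + 1) + σ ^ 2 * (2 * q0 + 1) ≠ 0 := by positivity
  rw [(hasDerivAt_VL σ q0 q1 hD).deriv, (hasDerivAt_VS σ q0 q1 hD).deriv, lamStar]
  field_simp

/-- Constant marginal-valuation ratio:
`∂V_L/∂n1 (q0,q1) = λ*(q0) · ∂V_S/∂n1 (q0,q1)`, independent of `q1`. -/
theorem stmt11 (σ : ℝ) (hσ : 0 < σ) (q0 q1 : ℝ) (h0 : 0 ≤ q0) (h1 : 0 ≤ q1) :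
    deriv (fun y => VL σ q0 y) q1 = lamStar σ q0 * deriv (fun y => VS σ q0 y) q1 :=
  stmt11_general σ q0 q1 h0 h1
end

section
/- Second-best composition distortion (pooling case): let λ ∈ (0,1] and c > 0. Define the first-best objective F(n0,n1) = λ·V_S(n0,n1) + (1−λ)·V_L(n0,n1) − c·(n0+n1) on [0,∞)×[0,∞). Suppose (n0*, n1*) maximizes F over [0,∞)×[0,∞) with n0* > 0 and n1* > 0, and suppose b > 0 is such that (b,b) maximizes V_L(n0,n1) − c·(n0+n1) over [0,∞)×[0,∞). Then n0* < b < n1*. -/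
theorem hasDerivAt_linFrac (a b p q x : ℝ) (hx : p * x + q ≠ 0) :
    HasDerivAt (fun y => (a * y + b) / (p * y + q)) ((a * q - b * p) / (p * x + q) ^ 2) x := by
  have hnum : HasDerivAt (fun y => a * y + b) a x := by
    simpa using ((hasDerivAt_id x).const_mul a).add_const b
  have hden : HasDerivAt (fun y => p * y + q) p x := by
    simpa using ((hasDerivAt_id x).const_mul p).add_const q
  exact (hnum.div hden hx).congr_deriv (by ring)

theorem IsLocalMax.linFrac_sub_mul_eq {a b p q c x : ℝ}
    (h : IsLocalMax (fun y => (a * y + b) / (p * y + q) - c * y) x) (hx : p * x + q ≠ 0) :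
    a * q - b * p = c * (p * x + q) ^ 2 := by
  have hderiv := (hasDerivAt_linFrac a b p q x hx).sub ((hasDerivAt_id x).const_mul c)
  have hzero : (a * q - b * p) / (p * x + q) ^ 2 - c * 1 = 0 := h.hasDerivAt_eq_zero hderiv
  field_simp at hzero
  linear_combination hzero

theorem Dden_pos_s17 (σ : ℝ) {x y : ℝ} (hx : 0 ≤ x) (hy : 0 ≤ y) : 0 < Dden σ x y := by
  unfold Dden; positivity

theorem Dden_comm (σ x y : ℝ) : Dden σ x y = Dden σ y x := by
  unfold Dden; ring

theorem Dden_eq_mul_add (σ x y : ℝ) :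
    Dden σ x y = (1 + x) * (1 + y + 2 * σ ^ 2 * y) + σ ^ 2 * (x - y) := by
  unfold Dden; ring

theorem Dden_le_Dden_left (σ : ℝ) {x x' y : ℝ} (hx : x ≤ x') (hy : 0 ≤ y) :
    Dden σ x y ≤ Dden σ x' y := by
  unfold Dden; nlinarith [mul_nonneg (sq_nonneg σ) (mul_nonneg (sub_nonneg.2 hx) hy)]

theorem Dden_le_Dden_right (σ : ℝ) {x y y' : ℝ} (hx : 0 ≤ x) (hy : y ≤ y') :
    Dden σ x y ≤ Dden σ x y' := by
  rw [Dden_comm σ x, Dden_comm σ x]; exact Dden_le_Dden_left σ hy hx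

noncomputable def firstBest (σ lam c n0 n1 : ℝ) : ℝ :=
  lam * VS σ n0 n1 + (1 - lam) * VL σ n0 n1 - c * (n0 + n1)

theorem firstBest_foc_fst {σ lam c n0 n1 : ℝ} (hn0 : 0 < n0) (hn1 : 0 ≤ n1)
    (hmax : ∀ m0, 0 ≤ m0 → firstBest σ lam c m0 n1 ≤ firstBest σ lam c n0 n1) :
    σ ^ 4 * (1 + n1) ^ 2 - lam * (σ ^ 4 * n1 * (2 + n1)) = c * Dden σ n0 n1 ^ 2 := by
  set a := σ ^ 4 * (1 + 2 * n1) + lam * (n1 * (3 * σ ^ 2 + 1))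
  set b := σ ^ 4 * n1 + lam * (n1 * (2 * σ ^ 2 + 1))
  set p := σ ^ 2 * (1 + 2 * n1) + (1 + n1)
  set q := σ ^ 2 * n1 + (1 + n1)
  have hD : ∀ m0, Dden σ m0 n1 = p * m0 + q := fun m0 => by unfold Dden; ring
  have hF : ∀ m0, firstBest σ lam c m0 n1 = (a * m0 + b) / (p * m0 + q) - c * m0 - c * n1 :=
    fun m0 => by rw [← hD]; unfold firstBest VS VL; ring
  have hloc : IsLocalMax (fun y => (a * y + b) / (p * y + q) - c * y) n0 := by
    filter_upwards [Ioi_mem_nhds hn0] with m0 hm0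
    have hle := hmax m0 hm0.le
    rw [hF, hF] at hle
    linarith
  have hfoc := hloc.linFrac_sub_mul_eq (by rw [← hD]; exact (Dden_pos_s17 σ hn0.le hn1).ne')
  rw [hD]
  linear_combination hfoc

theorem firstBest_foc_snd {σ lam c n0 n1 : ℝ} (hn0 : 0 ≤ n0) (hn1 : 0 < n1)
    (hmax : ∀ m1, 0 ≤ m1 → firstBest σ lam c n0 m1 ≤ firstBest σ lam c n0 n1) :
    σ ^ 4 * (1 + n0) ^ 2
        + lam * (((3 * σ ^ 2 + 1) * n0 + 2 * σ ^ 2 + 1) * (σ ^ 2 * n0 + 1 + n0))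
      = c * Dden σ n0 n1 ^ 2 := by
  set a := σ ^ 4 * (1 + 2 * n0) + lam * (3 * σ ^ 2 * n0 + 2 * σ ^ 2 + 1 + n0)
  set b := σ ^ 4 * n0
  set p := σ ^ 2 * (1 + 2 * n0) + (1 + n0)
  set q := σ ^ 2 * n0 + (1 + n0)
  have hD : ∀ m1, Dden σ n0 m1 = p * m1 + q := fun m1 => by unfold Dden; ring
  have hF : ∀ m1, firstBest σ lam c n0 m1 = (a * m1 + b) / (p * m1 + q) - c * m1 - c * n0 :=
    fun m1 => by rw [← hD]; unfold firstBest VS VL; ring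
  have hloc : IsLocalMax (fun y => (a * y + b) / (p * y + q) - c * y) n1 := by
    filter_upwards [Ioi_mem_nhds hn1] with m1 hm1
    have hle := hmax m1 hm1.le
    rw [hF, hF] at hle
    linarith
  have hfoc := hloc.linFrac_sub_mul_eq (by rw [← hD]; exact (Dden_pos_s17 σ hn0 hn1.le).ne')
  rw [hD]
  linear_combination hfoc

theorem lt_and_lt_of_mul_Dden_bounds {σ k n0 n1 b : ℝ} (hk : 0 ≤ k) (hn0 : 0 ≤ n0) (hn1 : 0 ≤ n1)
    (hkb : k * (1 + b + 2 * σ ^ 2 * b) = σ ^ 2)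
    (hlow : σ ^ 2 * (1 + n0) < k * Dden σ n0 n1) (hup : k * Dden σ n0 n1 < σ ^ 2 * (1 + n1)) :
    n0 < b ∧ b < n1 := by
  have hσ : 0 < σ ^ 2 := (sq_nonneg σ).lt_of_ne fun h => by rw [← h] at hlow hup; linarith
  have hn01 : n0 < n1 := by nlinarith
  have hkσ : 0 < k * σ ^ 2 :=
    mul_pos (hk.lt_of_ne fun h => by rw [← h] at hkb; linarith) hσ
  have hlin : ∀ x, k * Dden σ x b = σ ^ 2 * (1 + x) + k * σ ^ 2 * (x - b) := fun x => by
    rw [Dden_eq_mul_add]; linear_combination (1 + x) * hkb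
  constructor
  · by_contra! hbn0
    have hmono := mul_le_mul_of_nonneg_left (Dden_le_Dden_left σ hbn0 hn1) hk
    rw [Dden_comm, hlin] at hmono
    nlinarith
  · by_contra! hn1b
    have hmono := mul_le_mul_of_nonneg_left (Dden_le_Dden_right σ hn0 hn1b) hk
    rw [hlin] at hmono
    nlinarith

theorem stmt17_general (σ lam c : ℝ) (hσ : 0 < σ) (hl0 : 0 < lam) (hc : 0 < c)
    (n0s n1s b : ℝ) (hs0 : 0 < n0s) (hs1 : 0 < n1s) (hb : 0 < b)
    (hF : ∀ m0 m1 : ℝ, 0 ≤ m0 → 0 ≤ m1 →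
      lam * VS σ m0 m1 + (1-lam) * VL σ m0 m1 - c*(m0+m1) ≤
      lam * VS σ n0s n1s + (1-lam) * VL σ n0s n1s - c*(n0s+n1s))
    (hP : ∀ m0 m1 : ℝ, 0 ≤ m0 → 0 ≤ m1 →
      VL σ m0 m1 - c*(m0+m1) ≤ VL σ b b - c*(b+b)) :
    n0s < b ∧ b < n1s := by
  have hfoc0 := firstBest_foc_fst hs0 hs1.le fun m0 hm0 => hF m0 n1s hm0 hs1.le
  have hfoc1 := firstBest_foc_snd hs0.le hs1 fun m1 hm1 => hF n0s m1 hs0.le hm1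
  have hpool := firstBest_foc_fst (lam := 0) hb hb.le fun m0 hm0 => by
    simpa [firstBest] using hP m0 b hm0 hb.le
  obtain ⟨k, hk0, hk⟩ : ∃ k, 0 ≤ k ∧ k ^ 2 = c := ⟨√c, Real.sqrt_nonneg c, Real.sq_sqrt hc.le⟩
  have hkb : k * (1 + b + 2 * σ ^ 2 * b) = σ ^ 2 := by
    have hsq : (k * Dden σ b b) ^ 2 = (σ ^ 2 * (1 + b)) ^ 2 := by
      rw [mul_pow, hk]; linear_combination -hpool
    rw [sq_eq_sq₀ (mul_nonneg hk0 (Dden_pos_s17 σ hb.le hb.le).le) (by positivity),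
      Dden_eq_mul_add, sub_self] at hsq
    exact mul_right_cancel₀ (by positivity : (1 + b : ℝ) ≠ 0) (by linear_combination hsq)
  have hQ : 0 < ((3 * σ ^ 2 + 1) * n0s + 2 * σ ^ 2 + 1) * (σ ^ 2 * n0s + 1 + n0s) := by positivity
  have hlow : (σ ^ 2 * (1 + n0s)) ^ 2 < (k * Dden σ n0s n1s) ^ 2 := by
    rw [mul_pow k, hk, ← hfoc1]; nlinarith [mul_pos hl0 hQ]
  have hup : (k * Dden σ n0s n1s) ^ 2 < (σ ^ 2 * (1 + n1s)) ^ 2 := by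
    rw [mul_pow k, hk, ← hfoc0]; nlinarith [mul_pos hl0 (by positivity : 0 < σ ^ 4 * n1s * (2 + n1s))]
  exact lt_and_lt_of_mul_Dden_bounds hk0 hs0.le hs1.le hkb
    (lt_of_pow_lt_pow_left₀ 2 (mul_nonneg hk0 (Dden_pos_s17 σ hs0.le hs1.le).le) hlow)
    (lt_of_pow_lt_pow_left₀ 2 (by positivity) hup)

/-- Second-best composition distortion (pooling case): if `(b,b)` maximizes the
pooling objective and `(n0*,n1*)` is an interior first best, then `n0* < b < n1*`. -/
theorem stmt17 (σ lam c : ℝ) (hσ : 0 < σ) (hl0 : 0 < lam) (hl1 : lam ≤ 1) (hc : 0 < c)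
    (n0s n1s b : ℝ) (hs0 : 0 < n0s) (hs1 : 0 < n1s) (hb : 0 < b)
    (hF : ∀ m0 m1 : ℝ, 0 ≤ m0 → 0 ≤ m1 →
      lam * VS σ m0 m1 + (1-lam) * VL σ m0 m1 - c*(m0+m1) ≤
      lam * VS σ n0s n1s + (1-lam) * VL σ n0s n1s - c*(n0s+n1s))
    (hP : ∀ m0 m1 : ℝ, 0 ≤ m0 → 0 ≤ m1 →
      VL σ m0 m1 - c*(m0+m1) ≤ VL σ b b - c*(b+b)) :
    n0s < b ∧ b < n1s :=
  stmt17_general σ lam c hσ hl0 hc n0s n1s b hs0 hs1 hb hF hP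
end
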